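/- arXiv:1808.07791 — 9 statements merged into one kernel-verified Lean document; each statement's English description precedes it below -/
import Mathlib

section
/- If a k-periodic non-autonomous discrete dynamical system (X, f_{1,∞}) on a compact metric space has the strong specification property, then the autonomous system (X, g) with g = f_k ∘ f_{k-1} ∘ ⋯ ∘ f_1 also has the strong specification property. -/
open Metric TopologicalSpace MeasureTheory

/-- `nIter f n = f_n ∘ ⋯ ∘ f_1` (with `f (i)` playing the role of `f_{i+1}`), `nIter f 0 = id`. -/
def nIter {X : Type*} (f : ℕ → X → X) : ℕ → X → X
  | 0 => id
  | n + 1 => f n ∘ nIter f n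

/-- Strong specification property for a non-autonomous system. -/
def SSP {X : Type*} [MetricSpace X] (f : ℕ → X → X) : Prop :=
  ∀ ε : ℝ, ε > 0 → ∃ M : ℕ, ∀ k : ℕ, 1 ≤ k → ∀ (x : ℕ → X) (a b : ℕ → ℕ),
    (∀ i, i < k → a i ≤ b i) →
    (∀ i, i + 1 < k → b i < a (i + 1) ∧ M < a (i + 1) - b i) →
    ∀ p : ℕ, M + b (k - 1) - a 0 < p →
      ∃ z : X, (∀ m : ℕ, nIter f (p * m) z = z) ∧
        ∀ i, i < k → ∀ j, a i ≤ j → j ≤ b i →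
          dist (nIter f j z) (nIter f j (x i)) < ε

/-- Weak specification property for a non-autonomous system. -/
def WSP {X : Type*} [MetricSpace X] (f : ℕ → X → X) : Prop :=
  ∀ ε : ℝ, ε > 0 → ∃ N : ℕ, ∀ s : ℕ, 1 ≤ s → ∀ (x : ℕ → X) (a b : ℕ → ℕ),
    (∀ i, i < s → a i ≤ b i) →
    (∀ i, i + 1 < s → b i < a (i + 1) ∧ N < a (i + 1) - b i) →
      ∃ z : X, ∀ i, i < s → ∀ j, a i ≤ j → j ≤ b i →
        dist (nIter f j z) (nIter f j (x i)) < ε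

/-- Quasi-weak specification property for a non-autonomous system. -/
def QSP {X : Type*} [MetricSpace X] (f : ℕ → X → X) : Prop :=
  ∀ ε : ℝ, ε > 0 → ∃ M : ℕ, ∀ x₁ x₂ : X, ∀ n : ℕ, M ≤ n →
    ∃ z : X, dist z x₁ < ε ∧ dist (nIter f n z) (nIter f n x₂) < ε

/-- Topological mixing for a non-autonomous system. -/
def TopMixing {X : Type*} [TopologicalSpace X] (f : ℕ → X → X) : Prop :=
  ∀ U V : Set X, IsOpen U → IsOpen V → U.Nonempty → V.Nonempty →
    ∃ N : ℕ, ∀ n : ℕ, N ≤ n → (nIter f n '' U ∩ V).Nonempty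

/-- Topological transitivity for a non-autonomous system. -/
def TopTransitive {X : Type*} [TopologicalSpace X] (f : ℕ → X → X) : Prop :=
  ∀ U V : Set X, IsOpen U → IsOpen V → U.Nonempty → V.Nonempty →
    ∃ n : ℕ, 1 ≤ n ∧ (nIter f n '' U ∩ V).Nonempty

/-- Sensitive dependence on initial conditions for a non-autonomous system. -/
def Sensitive {X : Type*} [MetricSpace X] (f : ℕ → X → X) : Prop :=
  ∃ δ : ℝ, δ > 0 ∧ ∀ x : X, ∀ U : Set X, IsOpen U → x ∈ U →
    ∃ y ∈ U, ∃ n : ℕ, 1 ≤ n ∧ δ < dist (nIter f n x) (nIter f n y)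


private theorem nIter_const {X : Type*} (g : X → X) : ∀ n, nIter (fun _ => g) n = g^[n] := by
  intro n
  induction n with
  | zero => rfl
  | succ n ih => show g ∘ nIter (fun _ => g) n = _; rw [ih, ← Function.iterate_succ']

private theorem nIter_per_add {X : Type*} (f : ℕ → X → X) (k : ℕ)
    (hper : ∀ n x, f (n + k) x = f n x) :
    ∀ n x, nIter f (n + k) x = nIter f n (nIter f k x) := by
  intro n
  induction n with
  | zero => intro x; rw [Nat.zero_add]; rfl
  | succ n ih =>
      intro x
      rw [Nat.add_right_comm n 1 k]
      show f (n + k) (nIter f (n + k) x) = f n (nIter f n (nIter f k x))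
      rw [hper, ih]

private theorem nIter_kmul {X : Type*} (f : ℕ → X → X) (k : ℕ)
    (hper : ∀ n x, f (n + k) x = f n x) :
    ∀ j z, nIter f (k * j) z = (nIter f k)^[j] z := by
  intro j
  induction j with
  | zero => intro z; rfl
  | succ j ih =>
      intro z
      rw [Nat.mul_succ, nIter_per_add f k hper (k * j) z, ih,
        ← Function.iterate_succ_apply]

theorem stmt0 {X : Type*} [MetricSpace X] [CompactSpace X]
    (f : ℕ → X → X) (hc : ∀ n, Continuous (f n)) (hs : ∀ n, Function.Surjective (f n))
    (k : ℕ) (hk : 1 ≤ k) (hper : ∀ n x, f (n + k) x = f n x)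
    (h : SSP f) : SSP (fun _ => nIter f k) := by
  intro ε hε
  obtain ⟨M, hM⟩ := h ε hε
  refine ⟨M, ?_⟩
  intro s hs x a b hab hgap p hp
  -- a 0 ≤ b i for all i < s
  have hchain : ∀ i, i < s → a 0 ≤ b i := by
    intro i
    induction i with
    | zero => intro hi; exact hab 0 hi
    | succ n ih =>
        intro hi
        have h1 := hgap n hi
        have h2 := hab (n + 1) hi
        have h3 := ih (by omega)
        omega
  have hkle : ∀ m : ℕ, m ≤ k * m := fun m => Nat.le_mul_of_pos_left m hk
  -- apply SSP f with scaled times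
  have key := hM s hs x (fun i => k * a i) (fun i => k * b i) ?_ ?_ (k * p) ?_
  · obtain ⟨z, hz1, hz2⟩ := key
    refine ⟨z, ?_, ?_⟩
    · intro m
      have := hz1 m
      rw [nIter_const (nIter f k), ← nIter_kmul f k hper]
      rw [show k * (p * m) = k * p * m by ring]
      exact this
    · intro i hi j hji hjb
      rw [nIter_const (nIter f k), ← nIter_kmul f k hper, ← nIter_kmul f k hper]
      exact hz2 i hi (k * j) (Nat.mul_le_mul_left k hji) (Nat.mul_le_mul_left k hjb)
  · intro i hi
    exact Nat.mul_le_mul_left k (hab i hi)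
  · intro i hi
    obtain ⟨h1, h2⟩ := hgap i hi
    show k * b i < k * a (i + 1) ∧ M < k * a (i + 1) - k * b i
    have hd : b i + (a (i + 1) - b i) = a (i + 1) := by omega
    have hmul : k * a (i + 1) = k * b i + k * (a (i + 1) - b i) := by
      conv_lhs => rw [← hd]
      exact Nat.mul_add k _ _
    have := hkle (a (i + 1) - b i)
    constructor <;> omega
  · show M + k * b (s - 1) - k * a 0 < k * p
    have hd : a 0 + (b (s - 1) - a 0) = b (s - 1) := by
      have := hchain (s - 1) (by omega)
      omega
    have hmul : k * b (s - 1) = k * a 0 + k * (b (s - 1) - a 0) := by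
      conv_lhs => rw [← hd]
      exact Nat.mul_add k _ _
    have h1 : k * (M + (b (s - 1) - a 0) + 1) ≤ k * p := Nat.mul_le_mul_left k (by omega)
    have h2 : k * (M + (b (s - 1) - a 0) + 1)
        = k * M + k * (b (s - 1) - a 0) + k := by ring
    have h3 := hkle M
    omega
end

section
/- If a k-periodic non-autonomous discrete dynamical system (X, f_{1,∞}) on a compact metric space has the weak specification property, then the autonomous system (X, g) with g = f_k ∘ ⋯ ∘ f_1 also has the weak specification property. -/
open Metric TopologicalSpace MeasureTheory

lemma nIter_add {X : Type*} (f : ℕ → X → X) (a b : ℕ) (x : X) :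
    nIter f (a + b) x = nIter (fun i => f (a + i)) b (nIter f a x) := by
  induction b with
  | zero => rfl
  | succ b ih => simp [nIter, ← Nat.add_assoc, ih]

lemma nIter_congr {X : Type*} {f g : ℕ → X → X} (h : ∀ i x, f i x = g i x) (n : ℕ) (x : X) :
    nIter f n x = nIter g n x := by
  induction n with
  | zero => rfl
  | succ n ih => simp [nIter, ih, h]

lemma per_mul {X : Type*} (f : ℕ → X → X) (k : ℕ) (hper : ∀ n x, f (n + k) x = f n x)
    (n i : ℕ) (x : X) : f (k * n + i) x = f i x := by
  induction n with
  | zero => simp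
  | succ n ih =>
    have : k * (n + 1) + i = (k * n + i) + k := by ring
    rw [this, hper, ih]

lemma nIter_mul {X : Type*} (f : ℕ → X → X) (k : ℕ) (hper : ∀ n x, f (n + k) x = f n x)
    (n : ℕ) (x : X) : nIter (fun _ => nIter f k) n x = nIter f (k * n) x := by
  induction n with
  | zero => rfl
  | succ n ih =>
    have h1 : nIter (fun _ => nIter f k) (n + 1) x = nIter f k (nIter f (k * n) x) := by
      simp [nIter, ih]
    rw [h1]
    have h2 : nIter f (k * (n + 1)) x = nIter (fun i => f (k * n + i)) k (nIter f (k * n) x) := by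
      rw [Nat.mul_succ, nIter_add]
    rw [h2]
    exact (nIter_congr (fun i y => per_mul f k hper n i y) k _).symm

theorem stmt1 {X : Type*} [MetricSpace X] [CompactSpace X]
    (f : ℕ → X → X) (hc : ∀ n, Continuous (f n)) (hs : ∀ n, Function.Surjective (f n))
    (k : ℕ) (hk : 1 ≤ k) (hper : ∀ n x, f (n + k) x = f n x)
    (h : WSP f) : WSP (fun _ => nIter f k) := by
  intro ε hε
  obtain ⟨N, hN⟩ := h ε hε
  refine ⟨N, fun s hs1 x a b hab hgap => ?_⟩
  obtain ⟨z, hz⟩ := hN s hs1 x (fun i => k * a i) (fun i => k * b i)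
    (fun i hi => Nat.mul_le_mul_left k (hab i hi))
    (fun i hi => by
      obtain ⟨h1, h2⟩ := hgap i hi
      constructor
      · exact (Nat.mul_lt_mul_left (by omega)).mpr h1
      · calc N < a (i + 1) - b i := h2
          _ ≤ k * (a (i + 1) - b i) := Nat.le_mul_of_pos_left _ (by omega)
          _ = k * a (i + 1) - k * b i := Nat.mul_sub k _ _)
  refine ⟨z, fun i hi j hj1 hj2 => ?_⟩
  rw [nIter_mul f k hper j z, nIter_mul f k hper j (x i)]
  exact hz i hi (k * j) (Nat.mul_le_mul_left k hj1) (Nat.mul_le_mul_left k hj2)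
end

section
/- If non-autonomous systems (X, f_{1,∞}) and (Y, g_{1,∞}) are topologically semi-conjugate via a continuous surjection h : X → Y (i.e., h ∘ f_n = g_n ∘ h for each n) and (X, f_{1,∞}) has the strong specification property, then (Y, g_{1,∞}) also has the strong specification property. -/
open Metric TopologicalSpace MeasureTheory

lemma nIter_conj {X Y : Type*} (f : ℕ → X → X) (g : ℕ → Y → Y) (h : X → Y)
    (hconj : ∀ n x, h (f n x) = g n (h x)) : ∀ n x, h (nIter f n x) = nIter g n (h x) := by
  intro n
  induction n with
  | zero => intro x; rfl
  | succ n ih => intro x; simp [nIter, Function.comp, ih, hconj]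

theorem stmt2 {X Y : Type*} [MetricSpace X] [CompactSpace X] [MetricSpace Y] [CompactSpace Y]
    (f : ℕ → X → X) (g : ℕ → Y → Y)
    (hcf : ∀ n, Continuous (f n)) (hsf : ∀ n, Function.Surjective (f n))
    (hcg : ∀ n, Continuous (g n)) (hsg : ∀ n, Function.Surjective (g n))
    (h : X → Y) (hh : Continuous h) (hhs : Function.Surjective h)
    (hconj : ∀ n x, h (f n x) = g n (h x))
    (hf : SSP f) : SSP g := by
  intro ε hε
  obtain ⟨δ, hδ, hδε⟩ := Metric.uniformContinuous_iff.mp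
    (CompactSpace.uniformContinuous_of_continuous hh) ε hε
  obtain ⟨M, hM⟩ := hf δ hδ
  refine ⟨M, fun k hk x a b hab hgap p hp => ?_⟩
  choose x' hx' using fun i => hhs (x i)
  obtain ⟨z, hzper, hzspec⟩ := hM k hk x' a b hab hgap p hp
  refine ⟨h z, fun m => ?_, fun i hi j hji hjb => ?_⟩
  · rw [← nIter_conj f g h hconj, hzper]
  · rw [← hx' i, ← nIter_conj f g h hconj, ← nIter_conj f g h hconj]
    exact hδε (hzspec i hi j hji hjb)
end

section
/- A non-autonomous system (X, f_{1,∞}) on a compact metric space with each f_n surjective has the quasi-weak specification property if and only if it is topologically mixing. -/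
open Metric TopologicalSpace MeasureTheory

lemma nIter_surj {X : Type*} (f : ℕ → X → X) (hs : ∀ n, Function.Surjective (f n)) :
    ∀ n, Function.Surjective (nIter f n)
  | 0 => Function.surjective_id
  | n+1 => (hs n).comp (nIter_surj f hs n)

theorem stmt5 {X : Type*} [MetricSpace X] [CompactSpace X]
    (f : ℕ → X → X) (hc : ∀ n, Continuous (f n)) (hs : ∀ n, Function.Surjective (f n)) :
    QSP f ↔ TopMixing f := by
  constructor
  · rintro hq U V hU hV ⟨u, hu⟩ ⟨v, hv⟩
    obtain ⟨εu, hεu, hbu⟩ := Metric.isOpen_iff.mp hU u hu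
    obtain ⟨εv, hεv, hbv⟩ := Metric.isOpen_iff.mp hV v hv
    obtain ⟨M, hM⟩ := hq (min εu εv) (lt_min hεu hεv)
    refine ⟨M, fun n hn => ?_⟩
    obtain ⟨x₂, hx₂⟩ := nIter_surj f hs n v
    obtain ⟨z, hz1, hz2⟩ := hM u x₂ n hn
    refine ⟨nIter f n z, ⟨z, hbu ?_, rfl⟩, hbv ?_⟩
    · exact mem_ball.mpr (lt_of_lt_of_le hz1 (min_le_left _ _))
    · rw [hx₂] at hz2
      exact mem_ball.mpr (lt_of_lt_of_le hz2 (min_le_right _ _))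
  · intro hm ε hε
    have hε2 : (0:ℝ) < ε / 2 := by positivity
    obtain ⟨t, -, htf, htc⟩ := finite_cover_balls_of_compact (isCompact_univ (X := X)) hε2
    choose N hN using fun (u v : X) => hm (ball u (ε/2)) (ball v (ε/2)) isOpen_ball
      isOpen_ball ⟨u, mem_ball_self hε2⟩ ⟨v, mem_ball_self hε2⟩
    refine ⟨(htf.toFinset ×ˢ htf.toFinset).sup (fun p => N p.1 p.2), fun x₁ x₂ n hn => ?_⟩
    obtain ⟨u, hu, hu'⟩ : ∃ u ∈ t, x₁ ∈ ball u (ε/2) := by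
      simpa using htc (Set.mem_univ x₁)
    obtain ⟨v, hv, hv'⟩ : ∃ v ∈ t, nIter f n x₂ ∈ ball v (ε/2) := by
      simpa using htc (Set.mem_univ (nIter f n x₂))
    have hle : N u v ≤ n :=
      le_trans (Finset.le_sup (f := fun p => N p.1 p.2) (b := (u, v))
        (Finset.mem_product.mpr ⟨htf.mem_toFinset.mpr hu, htf.mem_toFinset.mpr hv⟩)) hn
    obtain ⟨w, ⟨z, hz, rfl⟩, hw⟩ := hN u v n hle
    refine ⟨z, ?_, ?_⟩
    · calc dist z x₁ ≤ dist z u + dist u x₁ := dist_triangle _ _ _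
        _ < ε/2 + ε/2 := add_lt_add (mem_ball.mp hz) (by rw [dist_comm]; exact mem_ball.mp hu')
        _ = ε := by ring
    · calc dist (nIter f n z) (nIter f n x₂)
          ≤ dist (nIter f n z) v + dist v (nIter f n x₂) := dist_triangle _ _ _
        _ < ε/2 + ε/2 := add_lt_add (mem_ball.mp hw) (by rw [dist_comm]; exact mem_ball.mp hv')
        _ = ε := by ring
end

section
/- Consider the non-autonomous system on ℝ with constant maps f_n(x) = 1/2^n for each n ∈ ℕ. This system satisfies the quasi-weak specification property but is not topologically transitive (hence not topologically mixing). -/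
open Metric TopologicalSpace MeasureTheory

theorem stmt6 :
    QSP (fun n (_ : ℝ) => (1 : ℝ) / 2 ^ (n + 1)) ∧
    ¬ TopTransitive (fun n (_ : ℝ) => (1 : ℝ) / 2 ^ (n + 1)) ∧
    ¬ TopMixing (fun n (_ : ℝ) => (1 : ℝ) / 2 ^ (n + 1)) := by
  set f : ℕ → ℝ → ℝ := fun n (_ : ℝ) => (1 : ℝ) / 2 ^ (n + 1) with hf
  have key : ∀ (n : ℕ) (z : ℝ), nIter f (n + 1) z = (1 : ℝ) / 2 ^ (n + 1) := fun n z => rfl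
  have hnt : ¬ TopTransitive f := by
    intro h
    obtain ⟨n, hn1, x, ⟨⟨u, _, hux⟩, hxV⟩⟩ :=
      h Set.univ (Set.Iio 0) isOpen_univ isOpen_Iio ⟨0, trivial⟩ ⟨-1, by norm_num⟩
    obtain ⟨m, rfl⟩ := Nat.exists_eq_add_of_le hn1
    rw [Nat.add_comm, key m u] at hux
    rw [← hux] at hxV
    simp only [Set.mem_Iio] at hxV
    have : (0:ℝ) < 1 / 2 ^ (m + 1) := by positivity
    linarith
  refine ⟨?_, hnt, ?_⟩
  · intro ε hε
    refine ⟨1, fun x₁ x₂ n hn => ⟨x₁, by simpa using hε, ?_⟩⟩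
    obtain ⟨m, rfl⟩ := Nat.exists_eq_add_of_le hn
    rw [Nat.add_comm, key m x₁, key m x₂]
    simpa using hε
  · intro h
    apply hnt
    intro U V hU hV hUne hVne
    obtain ⟨N, hN⟩ := h U V hU hV hUne hVne
    exact ⟨max N 1, le_max_right _ _, hN _ (le_max_left _ _)⟩
end

section
/- If a non-autonomous system (X, f_{1,∞}) on a compact metric space has the strong specification property, then the induced system (𝒦(X), f̄_{1,∞}) on the hyperspace of non-empty compact subsets with the Hausdorff metric also has the strong specification property. -/
open Metric TopologicalSpace MeasureTheory

lemma nIter_continuous {X : Type*} [TopologicalSpace X] (f : ℕ → X → X)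
    (hc : ∀ n, Continuous (f n)) : ∀ j, Continuous (nIter f j) := by
  intro j
  induction j with
  | zero => exact continuous_id
  | succ n ih => exact (hc n).comp ih

theorem stmt9 {X : Type*} [MetricSpace X] [CompactSpace X]
    (f : ℕ → X → X) (hc : ∀ n, Continuous (f n)) (hs : ∀ n, Function.Surjective (f n))
    (h : SSP f) :
    SSP (fun n (A : NonemptyCompacts X) =>
      (⟨⟨f n '' A, A.isCompact.image (hc n)⟩, A.nonempty.image (f n)⟩ :
        NonemptyCompacts X)) := by
  classical
  set F : ℕ → NonemptyCompacts X → NonemptyCompacts X := fun n (A : NonemptyCompacts X) =>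
      (⟨⟨f n '' A, A.isCompact.image (hc n)⟩, A.nonempty.image (f n)⟩ :
        NonemptyCompacts X) with hF
  -- key: coercion of iterates is the image of the iterate
  have hcoe : ∀ (n : ℕ) (A : NonemptyCompacts X),
      ((nIter F n A : NonemptyCompacts X) : Set X) = nIter f n '' (A : Set X) := by
    intro n
    induction n with
    | zero => intro A; simp [nIter]
    | succ m ih =>
      intro A
      show ((F m (nIter F m A) : NonemptyCompacts X) : Set X) = _
      have : ((F m (nIter F m A) : NonemptyCompacts X) : Set X)
          = f m '' ((nIter F m A : NonemptyCompacts X) : Set X) := rfl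
      rw [this, ih, ← Set.image_comp]
      rfl
  intro ε hε
  obtain ⟨M, hM⟩ := h (ε / 3) (by linarith)
  refine ⟨M, ?_⟩
  intro k hk A a b hab hgap p hp
  -- finite (ε/3)-nets for the pseudometrics max_{a i ≤ j ≤ b i} d(f^j ·, f^j ·)
  have hnet : ∀ i : Fin k, ∃ S : Set X, S ⊆ (A i : Set X) ∧ S.Finite ∧ S.Nonempty ∧
      ∀ c ∈ (A i : Set X), ∃ s ∈ S, ∀ j, a i ≤ j → j ≤ b i →
        dist (nIter f j c) (nIter f j s) < ε / 3 := by
    intro i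
    set U : X → Set X := fun y =>
      ⋂ j ∈ Finset.Icc (a (i : ℕ)) (b (i : ℕ)), (nIter f j) ⁻¹' (ball (nIter f j y) (ε / 3))
    have hUopen : ∀ y, IsOpen (U y) := by
      intro y
      exact isOpen_biInter_finset fun j _ =>
        ((nIter_continuous f hc j).isOpen_preimage _ isOpen_ball)
    have hUmem : ∀ y, y ∈ U y := by
      intro y
      simp only [U, Set.mem_iInter, Set.mem_preimage]
      intro j _
      exact mem_ball_self (by linarith)
    have hcover : (A (i : ℕ) : Set X) ⊆ ⋃ y ∈ (A (i : ℕ) : Set X), U y := fun c hc' =>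
      Set.mem_biUnion hc' (hUmem c)
    obtain ⟨S, hS₁, hS₂, hS₃⟩ := (A (i : ℕ)).isCompact.elim_finite_subcover_image
      (fun y _ => hUopen y) hcover
    obtain ⟨c₀, hc₀⟩ := (A (i : ℕ)).nonempty
    have hc₀' := hS₃ hc₀
    rw [Set.mem_iUnion₂] at hc₀'
    obtain ⟨s₀, hs₀, _⟩ := hc₀'
    refine ⟨S, hS₁, hS₂, ⟨s₀, hs₀⟩, ?_⟩
    intro c hcA
    have := hS₃ hcA
    rw [Set.mem_iUnion₂] at this
    obtain ⟨s, hsS, hcs⟩ := this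
    refine ⟨s, hsS, fun j hj₁ hj₂ => ?_⟩
    simp only [U, Set.mem_iInter, Set.mem_preimage] at hcs
    exact hcs j (Finset.mem_Icc.mpr ⟨hj₁, hj₂⟩)
  choose S hSsub hSfin hSne hSnet using hnet
  -- index type of tuples of net points
  haveI : ∀ i : Fin k, Finite (S i) := fun i => (hSfin i).to_subtype
  haveI : ∀ i : Fin k, Nonempty (S i) := fun i => (hSne i).to_subtype
  haveI hTfin : Finite (∀ i : Fin k, S i) := inferInstance
  haveI hTne : Nonempty (∀ i : Fin k, S i) := inferInstance
  -- apply SSP of f to each tuple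
  have hz : ∀ u : ∀ i : Fin k, S i, ∃ z : X, (∀ m : ℕ, nIter f (p * m) z = z) ∧
      ∀ i, i < k → ∀ j, a i ≤ j → j ≤ b i →
        dist (nIter f j z) (nIter f j
          (if hi : i < k then ((u ⟨i, hi⟩ : X)) else (u ⟨0, hk⟩ : X))) < ε / 3 := by
    intro u
    exact hM k hk (fun i => if hi : i < k then ((u ⟨i, hi⟩ : X)) else (u ⟨0, hk⟩ : X))
      a b hab hgap p hp
  choose z hzper hztr using hz
  -- the compact tracing set
  have hZfin : (Set.range z).Finite := Set.finite_range z
  refine ⟨⟨⟨Set.range z, hZfin.isCompact⟩, Set.range_nonempty z⟩, ?_, ?_⟩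
  · -- periodicity
    intro m
    apply NonemptyCompacts.ext
    rw [hcoe]
    show nIter f (p * m) '' Set.range z = Set.range z
    have : (nIter f (p * m)) ∘ z = z := funext fun u => hzper u m
    rw [← Set.range_comp, this]
  · -- tracing
    intro i hi j hj₁ hj₂
    rw [Metric.NonemptyCompacts.dist_eq, hcoe, hcoe]
    have h23 : (0:ℝ) ≤ 2 * (ε / 3) := by linarith
    have key : hausdorffDist (nIter f j '' (Set.range z)) (nIter f j '' (A i : Set X))
        ≤ 2 * (ε / 3) := by
      apply hausdorffDist_le_of_mem_dist h23
      · rintro w ⟨-, ⟨u, rfl⟩, rfl⟩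
        refine ⟨nIter f j (u ⟨i, hi⟩ : X), Set.mem_image_of_mem _
          (hSsub ⟨i, hi⟩ (u ⟨i, hi⟩).2), ?_⟩
        have := hztr u i hi j hj₁ hj₂
        rw [dif_pos hi] at this
        linarith [this]
      · rintro y ⟨c, hcA, rfl⟩
        obtain ⟨s, hsS, hclose⟩ := hSnet ⟨i, hi⟩ c hcA
        set u : ∀ i' : Fin k, S i' :=
          Function.update (Classical.arbitrary _) ⟨i, hi⟩ ⟨s, hsS⟩ with hu
        have hui : (u ⟨i, hi⟩ : X) = s := by
          rw [hu, Function.update_self]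
        refine ⟨nIter f j (z u), Set.mem_image_of_mem _ ⟨u, rfl⟩, ?_⟩
        have h1 := hztr u i hi j hj₁ hj₂
        rw [dif_pos hi, hui] at h1
        have h2 := hclose j hj₁ hj₂
        calc dist (nIter f j c) (nIter f j (z u))
            ≤ dist (nIter f j c) (nIter f j s) + dist (nIter f j s) (nIter f j (z u)) :=
              dist_triangle _ _ _
          _ ≤ 2 * (ε / 3) := by rw [dist_comm (nIter f j s)]; linarith
      -- done
    calc hausdorffDist (nIter f j '' (Set.range z)) (nIter f j '' (A i : Set X))
        ≤ 2 * (ε / 3) := key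
      _ < ε := by linarith
end

section
/- A non-autonomous system (X, f_{1,∞}) on a compact metric space has the weak specification property if and only if the induced hyperspace system (𝒦(X), f̄_{1,∞}) has the weak specification property. -/
open Metric TopologicalSpace MeasureTheory

private lemma nIter_cont {X : Type*} [TopologicalSpace X] {f : ℕ → X → X}
    (hc : ∀ n, Continuous (f n)) (n : ℕ) : Continuous (nIter f n) := by
  induction n with
  | zero => exact continuous_id
  | succ n ih => exact (hc n).comp ih

private lemma nIter_image {X : Type*} [MetricSpace X] {f : ℕ → X → X} (hc : ∀ n, Continuous (f n))
    (n : ℕ) (A : NonemptyCompacts X) :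
    ((nIter (fun n (A : NonemptyCompacts X) =>
      (⟨⟨f n '' A, A.isCompact.image (hc n)⟩, A.nonempty.image (f n)⟩ :
        NonemptyCompacts X)) n A : NonemptyCompacts X) : Set X) = nIter f n '' (A : Set X) := by
  induction n with
  | zero => simp [nIter]
  | succ n ih =>
    show f n '' _ = _
    rw [ih, Set.image_image]
    rfl

theorem stmt10 {X : Type*} [MetricSpace X] [CompactSpace X]
    (f : ℕ → X → X) (hc : ∀ n, Continuous (f n)) (hs : ∀ n, Function.Surjective (f n)) :
    WSP f ↔
    WSP (fun n (A : NonemptyCompacts X) =>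
      (⟨⟨f n '' A, A.isCompact.image (hc n)⟩, A.nonempty.image (f n)⟩ :
        NonemptyCompacts X)) := by
  constructor
  · intro h ε hε
    obtain ⟨N, hN⟩ := h (ε/2) (by linarith)
    refine ⟨N, ?_⟩
    intro s hs A a b hab hgap
    classical
    set S : Set X := {z | ∃ c : ℕ → X, (∀ i, i < s → c i ∈ (A i : Set X)) ∧
      ∀ i, i < s → ∀ j, a i ≤ j → j ≤ b i →
        dist (nIter f j z) (nIter f j (c i)) < ε/2} with hS
    have key : ∀ c : ℕ → X, (∀ i, i < s → c i ∈ (A i : Set X)) →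
        ∃ z ∈ S, ∀ i, i < s → ∀ j, a i ≤ j → j ≤ b i →
          dist (nIter f j z) (nIter f j (c i)) < ε/2 := by
      intro c hcmem
      obtain ⟨z, hz⟩ := hN s hs c a b hab hgap
      exact ⟨z, ⟨c, hcmem, hz⟩, hz⟩
    have hSne : S.Nonempty := by
      obtain ⟨z, hz, -⟩ := key (fun i => (A i).nonempty.some) (fun i _ => (A i).nonempty.some_mem)
      exact ⟨z, hz⟩
    refine ⟨⟨⟨closure S, isClosed_closure.isCompact⟩, hSne.closure⟩, ?_⟩
    intro i hi j haj hjb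
    rw [NonemptyCompacts.dist_eq, nIter_image hc, nIter_image hc]
    show hausdorffDist (nIter f j '' closure S) (nIter f j '' (A i : Set X)) < ε
    have h1 : ∀ y ∈ nIter f j '' closure S, infDist y (nIter f j '' (A i : Set X)) ≤ ε/2 := by
      rintro y ⟨z, hz, rfl⟩
      have hmem : z ∈ {w | infDist (nIter f j w) (nIter f j '' (A i : Set X)) ≤ ε/2} := by
        refine closure_minimal ?_ ?_ hz
        · rintro w ⟨c, hcmem, htr⟩
          show infDist (nIter f j w) (nIter f j '' (A i : Set X)) ≤ ε/2
          have hd := htr i hi j haj hjb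
          have : infDist (nIter f j w) (nIter f j '' (A i : Set X))
              ≤ dist (nIter f j w) (nIter f j (c i)) :=
            infDist_le_dist_of_mem ⟨c i, hcmem i hi, rfl⟩
          linarith
        · exact isClosed_le ((continuous_infDist_pt _).comp (nIter_cont hc j)) continuous_const
      exact hmem
    have h2 : ∀ y ∈ nIter f j '' (A i : Set X), infDist y (nIter f j '' closure S) ≤ ε/2 := by
      rintro y ⟨u, hu, rfl⟩
      set c : ℕ → X := fun i' => if i' = i then u else (A i').nonempty.some with hcdef
      have hcmem : ∀ i', i' < s → c i' ∈ (A i' : Set X) := by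
        intro i' _
        by_cases hh : i' = i
        · subst hh; simpa [hcdef] using hu
        · simpa [hcdef, hh] using (A i').nonempty.some_mem
      obtain ⟨z, hzS, htr⟩ := key c hcmem
      have hd := htr i hi j haj hjb
      have hci : c i = u := by simp [hcdef]
      rw [hci] at hd
      have : infDist (nIter f j u) (nIter f j '' closure S)
          ≤ dist (nIter f j u) (nIter f j z) :=
        infDist_le_dist_of_mem ⟨z, subset_closure hzS, rfl⟩
      rw [dist_comm] at hd
      linarith
    have := hausdorffDist_le_of_infDist (by linarith) h1 h2
    linarith
  · intro h ε hε
    obtain ⟨N, hN⟩ := h ε hε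
    refine ⟨N, ?_⟩
    intro s hs x a b hab hgap
    set A : ℕ → NonemptyCompacts X := fun i =>
      ⟨⟨{x i}, isCompact_singleton⟩, Set.singleton_nonempty _⟩ with hA
    obtain ⟨Z, hZ⟩ := hN s hs A a b hab hgap
    obtain ⟨z, hz⟩ := Z.nonempty
    refine ⟨z, ?_⟩
    intro i hi j haj hjb
    have hd := hZ i hi j haj hjb
    rw [NonemptyCompacts.dist_eq, nIter_image hc, nIter_image hc] at hd
    have hAi : (A i : Set X) = {x i} := rfl
    rw [hAi, Set.image_singleton] at hd
    have hfin : EMetric.hausdorffEdist (nIter f j '' (Z : Set X)) {nIter f j (x i)} ≠ ⊤ :=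
      hausdorffEdist_ne_top_of_nonempty_of_bounded (Z.nonempty.image _) (Set.singleton_nonempty _)
        ((Z.isCompact.image (nIter_cont hc j)).isBounded) Bornology.isBounded_singleton
    have hle := infDist_le_hausdorffDist_of_mem (Set.mem_image_of_mem _ hz) hfin
    rw [infDist_singleton] at hle
    linarith
end

section
/- If a single point x ∈ X is identified with the Dirac measure δ_x, then for the induced system on Borel probability measures, a non-autonomous system (X, f_{1,∞}) with the strong specification property induces a system (ℳ(X), f̃_{1,∞}) that also has the strong specification property. -/
open Metric TopologicalSpace MeasureTheory

/-!
Quantize each `μᵢ` through finitely many points, `μᵢ ≈ (eᵢ ∘ gᵢ)₊μᵢ` with `gᵢ : X → ℕ`; by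
continuity of the finitely many `f̃₁ʲ` of the `i`-th block the error stays below `ε/2` along that
block. Couple the laws `(gᵢ)₊μᵢ` as a product measure `P` on the countable space `Fin k → ℕ`, and
for each `ω` let `z ω` be a `p`-periodic point that `ε/2`-shadows the points `eᵢ (ω i)` on the
blocks; `z` is measurable because its domain is countable. Then `ρ = z₊P` is `p`-periodic, and
since pointwise closeness of two random points bounds the Lévy–Prokhorov distance of their laws,
`f̃₁ʲ ρ` is `ε`-close to `f̃₁ʲ μᵢ` on the `i`-th block.
-/

open Filter Set Topology

section Iterates

variable {X : Type*} {f : ℕ → X → X}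

lemma continuous_nIter [TopologicalSpace X] (hc : ∀ n, Continuous (f n)) :
    ∀ j, Continuous (nIter f j)
  | 0 => continuous_id
  | j + 1 => (hc j).comp (continuous_nIter hc j)

lemma measurable_nIter [MeasurableSpace X] (hf : ∀ n, Measurable (f n)) :
    ∀ j, Measurable (nIter f j)
  | 0 => measurable_id
  | j + 1 => (hf j).comp (measurable_nIter hf j)

end Iterates

lemma levyProkhorovDist_map_le_of_forall_dist_le {Ω X : Type*} [MeasurableSpace Ω]
    [PseudoMetricSpace X] [MeasurableSpace X] [OpensMeasurableSpace X]
    (P : Measure Ω) [IsProbabilityMeasure P] {x y : Ω → X} (hx : Measurable x) (hy : Measurable y)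
    {δ : ℝ} (hδ : 0 ≤ δ) (hxy : ∀ ω, dist (x ω) (y ω) ≤ δ) :
    levyProkhorovDist (P.map x) (P.map y) ≤ δ := by
  have := Measure.isProbabilityMeasure_map (μ := P) hx.aemeasurable
  have := Measure.isProbabilityMeasure_map (μ := P) hy.aemeasurable
  refine levyProkhorovDist_le_of_forall_le _ _ hδ fun ε B hε hB => ?_
  have hsub : x ⁻¹' B ⊆ y ⁻¹' thickening ε B := fun ω hω =>
    mem_thickening_iff.2 ⟨x ω, hω, by rw [dist_comm]; exact (hxy ω).trans_lt hε⟩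
  calc P.map x B = P (x ⁻¹' B) := Measure.map_apply hx hB
    _ ≤ P (y ⁻¹' thickening ε B) := measure_mono hsub
    _ = P.map y (thickening ε B) := (Measure.map_apply hy isOpen_thickening.measurableSet).symm
    _ ≤ _ := le_self_add

lemma map_comp_eval_pi {ι : Type*} [Fintype ι] {Ω : ι → Type*} [∀ i, MeasurableSpace (Ω i)]
    (P : ∀ i, Measure (Ω i)) [∀ i, IsProbabilityMeasure (P i)] (i : ι) {Y : Type*}
    [MeasurableSpace Y] {φ : Ω i → Y} (hφ : Measurable φ) :
    (Measure.pi P).map (φ ∘ Function.eval i) = (P i).map φ := by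
  rw [← Measure.map_map hφ (measurable_pi_apply i), (measurePreserving_eval P i).map_eq]

lemma exists_measurable_nat_quantizer {X : Type*} [PseudoMetricSpace X] [CompactSpace X]
    [Nonempty X] [MeasurableSpace X] [OpensMeasurableSpace X] {δ : ℝ} (hδ : 0 < δ) :
    ∃ (g : X → ℕ) (e : ℕ → X), Measurable g ∧ ∀ y, dist (e (g y)) y < δ := by
  obtain ⟨e, he⟩ := exists_dense_seq X
  obtain ⟨s, hs⟩ := isCompact_univ.elim_finite_subcover (fun n => ball (e n) δ)
    (fun _ => isOpen_ball) fun y _ => mem_iUnion.2 <| by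
      obtain ⟨n, hn⟩ := he.exists_dist_lt y hδ
      exact ⟨n, mem_ball.2 hn⟩
  refine ⟨SimpleFunc.nearestPtInd e (s.sup id), e, SimpleFunc.measurable _, fun y => ?_⟩
  obtain ⟨n, hn, hy⟩ : ∃ n ∈ s, y ∈ ball (e n) δ := by simpa using hs (mem_univ y)
  have hnearest := SimpleFunc.edist_nearestPt_le e y (Finset.le_sup (f := id) hn)
  rw [edist_dist, edist_dist, ENNReal.ofReal_le_ofReal_iff dist_nonneg] at hnearest
  exact hnearest.trans_lt (mem_ball'.1 hy)

noncomputable def inducedSystem {X : Type*} [MeasurableSpace X] (f : ℕ → X → X)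
    (hf : ∀ n, Measurable (f n)) (n : ℕ) (μ : LevyProkhorov (ProbabilityMeasure X)) :
    LevyProkhorov (ProbabilityMeasure X) :=
  LevyProkhorov.toMeasureEquiv.symm ((LevyProkhorov.toMeasureEquiv μ).map (hf n).aemeasurable)

section InducedSystem

variable {X : Type*} [MeasurableSpace X] {f : ℕ → X → X}

lemma toMeasure_nIter_inducedSystem (hf : ∀ n, Measurable (f n))
    (μ : LevyProkhorov (ProbabilityMeasure X)) :
    ∀ j, ((nIter (inducedSystem f hf) j μ).toMeasure : Measure X) =
      (μ.toMeasure : Measure X).map (nIter f j)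
  | 0 => Measure.map_id.symm
  | j + 1 => by
    change ((((nIter (inducedSystem f hf) j μ).toMeasure).map (hf j).aemeasurable :
      ProbabilityMeasure X) : Measure X) = _
    rw [ProbabilityMeasure.toMeasure_map, toMeasure_nIter_inducedSystem hf μ j,
      Measure.map_map (hf j) (measurable_nIter hf j)]
    rfl

lemma nIter_inducedSystem_ofMeasure_map_eq_self (hf : ∀ n, Measurable (f n)) {Ω : Type*}
    [MeasurableSpace Ω] (P : ProbabilityMeasure Ω) {z : Ω → X} (hz : Measurable z) {n : ℕ}
    (hper : ∀ ω, nIter f n (z ω) = z ω) :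
    nIter (inducedSystem f hf) n (.ofMeasure (P.map hz.aemeasurable)) =
      .ofMeasure (P.map hz.aemeasurable) := by
  refine LevyProkhorov.toMeasure_injective (ProbabilityMeasure.toMeasure_injective ?_)
  rw [toMeasure_nIter_inducedSystem, ProbabilityMeasure.toMeasure_map,
    Measure.map_map (measurable_nIter hf n) hz, show nIter f n ∘ z = z from funext hper]

lemma dist_nIter_inducedSystem_ofMeasure_map_lt [PseudoMetricSpace X] [OpensMeasurableSpace X]
    (hf : ∀ n, Measurable (f n)) {Ω : Type*} [MeasurableSpace Ω] (P : ProbabilityMeasure Ω)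
    {z y : Ω → X} (hz : Measurable z) (hy : Measurable y)
    (ν : LevyProkhorov (ProbabilityMeasure X)) {j : ℕ} {δ η : ℝ} (hδ : 0 ≤ δ)
    (hzy : ∀ ω, dist (nIter f j (z ω)) (nIter f j (y ω)) ≤ δ)
    (hyν : levyProkhorovDist (((P : Measure Ω).map y).map (nIter f j))
      ((ν.toMeasure : Measure X).map (nIter f j)) < η) :
    dist (nIter (inducedSystem f hf) j (.ofMeasure (P.map hz.aemeasurable)))
      (nIter (inducedSystem f hf) j ν) < δ + η := by
  have hfj := measurable_nIter hf j
  rw [Measure.map_map hfj hy] at hyν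
  rw [LevyProkhorov.dist_probabilityMeasure_def, toMeasure_nIter_inducedSystem,
    toMeasure_nIter_inducedSystem, ProbabilityMeasure.toMeasure_map, Measure.map_map hfj hz]
  calc _ ≤ levyProkhorovDist ((P : Measure Ω).map (nIter f j ∘ z))
          ((P : Measure Ω).map (nIter f j ∘ y)) +
        levyProkhorovDist ((P : Measure Ω).map (nIter f j ∘ y))
          ((ν.toMeasure : Measure X).map (nIter f j)) :=
        levyProkhorovDist_triangle _ _ _
    _ < δ + η := add_lt_add_of_le_of_lt
        (levyProkhorovDist_map_le_of_forall_dist_le _ (hfj.comp hz) (hfj.comp hy) hδ hzy) hyν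

lemma continuous_inducedSystem [PseudoMetricSpace X] [BorelSpace X] [SeparableSpace X]
    (hc : ∀ n, Continuous (f n)) (n : ℕ) :
    Continuous (inducedSystem f (fun n => (hc n).measurable) n) :=
  LevyProkhorov.continuous_ofMeasure_probabilityMeasure.comp
    ((ProbabilityMeasure.continuous_map (hc n)).comp
      LevyProkhorov.continuous_toMeasure_probabilityMeasure)

lemma exists_quantizer_levyProkhorovDist_map_nIter_lt [PseudoMetricSpace X] [BorelSpace X]
    [CompactSpace X] (hc : ∀ n, Continuous (f n)) (μ : ProbabilityMeasure X) (J : Finset ℕ)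
    {ε : ℝ} (hε : 0 < ε) :
    ∃ (g : X → ℕ) (e : ℕ → X), Measurable g ∧ ∀ j ∈ J,
      levyProkhorovDist (((μ : Measure X).map (e ∘ g)).map (nIter f j))
        ((μ : Measure X).map (nIter f j)) < ε := by
  have hf : ∀ n, Measurable (f n) := fun n => (hc n).measurable
  have : Nonempty X := nonempty_of_isProbabilityMeasure (μ : Measure X)
  have hnear : ∀ᶠ ν in 𝓝 (LevyProkhorov.ofMeasure μ), ∀ j ∈ J,
      dist (nIter (inducedSystem f hf) j ν) (nIter (inducedSystem f hf) j (.ofMeasure μ)) < ε :=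
    (eventually_all_finset J).2 fun j _ =>
      (continuous_nIter (continuous_inducedSystem hc) j).continuousAt (ball_mem_nhds _ hε)
  obtain ⟨δ, hδ, hball⟩ := Metric.eventually_nhds_iff.1 hnear
  obtain ⟨g, e, hg, hge⟩ := exists_measurable_nat_quantizer (X := X) (half_pos hδ)
  have heg : Measurable (e ∘ g) := measurable_from_nat.comp hg
  refine ⟨g, e, hg, fun j hj => ?_⟩
  have hclose := hball (y := .ofMeasure (μ.map heg.aemeasurable)) ?_ j hj
  · rwa [LevyProkhorov.dist_probabilityMeasure_def, toMeasure_nIter_inducedSystem,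
      toMeasure_nIter_inducedSystem, ProbabilityMeasure.toMeasure_map] at hclose
  · calc _ = levyProkhorovDist ((μ : Measure X).map (e ∘ g)) ((μ : Measure X).map id) := by
          rw [Measure.map_id]; rfl
      _ ≤ δ / 2 := levyProkhorovDist_map_le_of_forall_dist_le _ heg measurable_id
          (half_pos hδ).le fun y => (hge y).le
      _ < δ := half_lt_self hδ

end InducedSystem

theorem stmt11_general {X : Type*} [MetricSpace X] [CompactSpace X] [MeasurableSpace X] [BorelSpace X]
    (f : ℕ → X → X) (hc : ∀ n, Continuous (f n))
    (h : SSP f) :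
    SSP (fun n (μ : LevyProkhorov (ProbabilityMeasure X)) =>
      (LevyProkhorov.toMeasureEquiv (α := ProbabilityMeasure X)).symm
        (((LevyProkhorov.toMeasureEquiv (α := ProbabilityMeasure X)) μ).map
          (hc n).measurable.aemeasurable)) := by
  have hf : ∀ n, Measurable (f n) := fun n => (hc n).measurable
  change SSP (inducedSystem f hf)
  intro ε hε
  obtain ⟨M, hM⟩ := h (ε / 2) (half_pos hε)
  refine ⟨M, fun k hk μ a b hab hgap p hp => ?_⟩
  choose g e hg he using fun i => exists_quantizer_levyProkhorovDist_map_nIter_lt hc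
    (μ i).toMeasure (Finset.Icc (a i) (b i)) (half_pos hε)
  let Q (l : Fin k) : ProbabilityMeasure ℕ := (μ l).toMeasure.map (hg l).aemeasurable
  let P : ProbabilityMeasure (Fin k → ℕ) := ⟨Measure.pi fun l => Q l, inferInstance⟩
  let x (ω : Fin k → ℕ) (i : ℕ) : X := e i (Function.extend Fin.val ω 0 i)
  choose z hz_per hz_close using fun ω => hM k hk (x ω) a b hab hgap p hp
  have hz : Measurable z := measurable_of_countable z
  refine ⟨.ofMeasure (P.map hz.aemeasurable),
    fun m => nIter_inducedSystem_ofMeasure_map_eq_self hf P hz (hz_per · m),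
    fun i hi j hj₁ hj₂ => ?_⟩
  have hlaw : (P : Measure (Fin k → ℕ)).map (x · i) =
      ((μ i).toMeasure : Measure X).map (e i ∘ g i) := by
    have hx : (x · i) = e i ∘ Function.eval ⟨i, hi⟩ :=
      funext fun ω => congrArg (e i) (Fin.val_injective.extend_apply ω 0 ⟨i, hi⟩)
    rw [hx, ← Measure.map_map measurable_from_nat (hg i),
      ← ProbabilityMeasure.toMeasure_map _ (hg i).aemeasurable]
    exact map_comp_eval_pi (fun l => (Q l : Measure ℕ)) ⟨i, hi⟩ measurable_from_nat
  refine (dist_nIter_inducedSystem_ofMeasure_map_lt hf P hz (measurable_of_countable _) (μ i)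
    (half_pos hε).le (fun ω => (hz_close ω i hi j hj₁ hj₂).le) ?_).trans_eq (add_halves ε)
  rw [hlaw]
  exact he i j (Finset.mem_Icc.2 ⟨hj₁, hj₂⟩)

theorem stmt11 {X : Type*} [MetricSpace X] [CompactSpace X] [MeasurableSpace X] [BorelSpace X]
    (f : ℕ → X → X) (hc : ∀ n, Continuous (f n)) (hs : ∀ n, Function.Surjective (f n))
    (h : SSP f) :
    SSP (fun n (μ : LevyProkhorov (ProbabilityMeasure X)) =>
      (LevyProkhorov.toMeasureEquiv (α := ProbabilityMeasure X)).symm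
        (((LevyProkhorov.toMeasureEquiv (α := ProbabilityMeasure X)) μ).map
          (hc n).measurable.aemeasurable)) :=
  stmt11_general f hc h
end

section
/- Consider the non-autonomous system on the two-sided shift space Σ_2 = {0,1}^ℤ given by the sequence f_{1,∞} = {σ, σ^{-1}, σ^2, σ^{-2}, σ^3, σ^{-3}, …}, where σ is the shift homeomorphism. Then every point of Σ_2 is periodic for this system, the system is topologically transitive and sensitive, but it is not topologically mixing. -/
/-! Since `f_{2k} ∘ f_{2k-1} = id`, every point returns at all even times, so two disjoint open
sets never meet at even times and mixing fails. The odd times `f_1^{2k-1} = σ^k` run through all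
positive powers of the shift: gluing a far-shifted copy of a point of `V` onto a point of `U` gives
transitivity, and flipping a single far coordinate, which the shift later brings to the origin,
gives sensitivity. -/

open Metric TopologicalSpace MeasureTheory

variable {α : Type*}

/-- The metric `ρ` of the two-sided shift space. -/
noncomputable def shiftDist [DecidableEq α] (x y : ℤ → α) : ℝ :=
  ∑' j : ℤ, (if x j = y j then (0 : ℝ) else 1) / 2 ^ j.natAbs

theorem shiftDist_eq_of_differ_only_at [DecidableEq α] {x y : ℤ → α} {i : ℤ} (hi : x i ≠ y i)
    (h : ∀ j ≠ i, x j = y j) : shiftDist x y = 1 / 2 ^ i.natAbs := by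
  rw [shiftDist, tsum_eq_single i fun j hj => by simp [h j hj], if_neg hi]

theorem exists_cylinder_subset_of_isOpen [TopologicalSpace α] {U : Set (ℤ → α)} (hU : IsOpen U)
    {x : ℤ → α} (hx : x ∈ U) :
    ∃ N : ℕ, ∀ w : ℤ → α, (∀ j : ℤ, j.natAbs ≤ N → w j = x j) → w ∈ U := by
  obtain ⟨I, u, hu, hIU⟩ := isOpen_pi_iff.mp hU x hx
  refine ⟨I.sup Int.natAbs, fun w hw => hIU fun j hj => ?_⟩
  rw [hw j (Finset.le_sup hj)]
  exact (hu j hj).2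

theorem not_topMixing_of_frequently_nIter_eq_id {X : Type*} [TopologicalSpace X] [T2Space X]
    [Nontrivial X] {f : ℕ → X → X} (h : ∃ᶠ n in Filter.atTop, nIter f n = id) :
    ¬ TopMixing f := by
  intro hmix
  obtain ⟨a, b, hab⟩ := exists_pair_ne X
  obtain ⟨U, V, hU, hV, ha, hb, hUV⟩ := t2_separation hab
  obtain ⟨N, hN⟩ := hmix U V hU hV ⟨a, ha⟩ ⟨b, hb⟩
  obtain ⟨n, hNn, hn⟩ := Filter.frequently_atTop.mp h N
  have hUV' := hN n hNn
  rw [hn, Set.image_id] at hUV'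
  exact Set.not_disjoint_iff_nonempty_inter.mpr hUV' hUV

section ShiftZigzag

variable {F : ℕ → (ℤ → α) → (ℤ → α)}

theorem nIter_two_mul (hF0 : ∀ k : ℕ, ∀ x : ℤ → α, ∀ j : ℤ, F (2 * k) x j = x (j + (k + 1)))
    (hF1 : ∀ k : ℕ, ∀ x : ℤ → α, ∀ j : ℤ, F (2 * k + 1) x j = x (j - (k + 1))) (m : ℕ) :
    nIter F (2 * m) = id := by
  induction m with
  | zero => rfl
  | succ m ih =>
    funext x j
    change F (2 * m + 1) (F (2 * m) (nIter F (2 * m) x)) j = x j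
    rw [ih, hF1, hF0, sub_add_cancel, id]

theorem nIter_two_mul_add_one_apply
    (hF0 : ∀ k : ℕ, ∀ x : ℤ → α, ∀ j : ℤ, F (2 * k) x j = x (j + (k + 1)))
    (hF1 : ∀ k : ℕ, ∀ x : ℤ → α, ∀ j : ℤ, F (2 * k + 1) x j = x (j - (k + 1)))
    (m : ℕ) (x : ℤ → α) (j : ℤ) : nIter F (2 * m + 1) x j = x (j + (m + 1)) := by
  change F (2 * m) (nIter F (2 * m) x) j = _
  rw [nIter_two_mul hF0 hF1, hF0, id]

theorem topTransitive_of_shift_zigzag [TopologicalSpace α]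
    (hF0 : ∀ k : ℕ, ∀ x : ℤ → α, ∀ j : ℤ, F (2 * k) x j = x (j + (k + 1)))
    (hF1 : ∀ k : ℕ, ∀ x : ℤ → α, ∀ j : ℤ, F (2 * k + 1) x j = x (j - (k + 1))) :
    TopTransitive F := by
  rintro U V hU hV ⟨x, hx⟩ ⟨y, hy⟩
  obtain ⟨N₁, hxU⟩ := exists_cylinder_subset_of_isOpen hU hx
  obtain ⟨N₂, hyV⟩ := exists_cylinder_subset_of_isOpen hV hy
  set N := max N₁ N₂
  -- `z` follows `x` near the origin and a copy of `y` moved far enough right not to overlap it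
  let z : ℤ → α := fun j => if j.natAbs ≤ N then x j else y (j - (2 * N + 2))
  refine ⟨2 * (2 * N + 1) + 1, by omega, _, ⟨z, hxU z fun j hj => if_pos (by omega), rfl⟩,
    hyV _ fun j hj => ?_⟩
  rw [nIter_two_mul_add_one_apply hF0 hF1]
  simp only [z, if_neg (show ¬(j + (↑(2 * N + 1) + 1)).natAbs ≤ N by omega)]
  congr 1
  push_cast
  ring

theorem sensitive_of_shift_zigzag [DecidableEq α] [Nontrivial α] [MetricSpace (ℤ → α)]
    (hd : ∀ x y : ℤ → α, dist x y = shiftDist x y)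
    (hF0 : ∀ k : ℕ, ∀ x : ℤ → α, ∀ j : ℤ, F (2 * k) x j = x (j + (k + 1)))
    (hF1 : ∀ k : ℕ, ∀ x : ℤ → α, ∀ j : ℤ, F (2 * k + 1) x j = x (j - (k + 1))) :
    Sensitive F := by
  refine ⟨1 / 2, by norm_num, fun x U hU hx => ?_⟩
  obtain ⟨ε, hε, hball⟩ := Metric.isOpen_iff.mp hU x hx
  obtain ⟨N, hN⟩ := exists_pow_lt_of_lt_one hε (by norm_num : (1 : ℝ) / 2 < 1)
  obtain ⟨b, hb⟩ := exists_ne (x (N + 1))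
  -- flipping the coordinate `N + 1` moves `x` by `2⁻¹ ^ (N + 1)`, but the shift by `N + 1`
  -- carries it to the origin, where it costs `1`
  set y := Function.update x ((N : ℤ) + 1) b
  have hxy : x (N + 1) ≠ y (N + 1) := by simpa [y] using hb.symm
  have hy : ∀ j ≠ (N : ℤ) + 1, x j = y j := fun j hj => (Function.update_of_ne hj _ _).symm
  refine ⟨y, hball ?_, 2 * N + 1, by omega, ?_⟩
  · rw [Metric.mem_ball, dist_comm, hd, shiftDist_eq_of_differ_only_at hxy hy]
    calc (1 : ℝ) / 2 ^ ((N : ℤ) + 1).natAbs = (1 / 2) ^ (N + 1) := by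
          rw [one_div_pow]; norm_cast
      _ < (1 / 2) ^ N := pow_lt_pow_right_of_lt_one₀ (by norm_num) (by norm_num) (by omega)
      _ < ε := hN
  · rw [hd, shiftDist_eq_of_differ_only_at (i := 0)]
    · norm_num
    · simpa only [nIter_two_mul_add_one_apply hF0 hF1, zero_add] using hxy
    · intro j hj
      simp only [nIter_two_mul_add_one_apply hF0 hF1]
      exact hy _ (by omega)

end ShiftZigzag

theorem stmt14 [inst : MetricSpace (ℤ → Bool)]
    (hd : ∀ x y : ℤ → Bool,
      dist x y = ∑' j : ℤ, (if x j = y j then (0 : ℝ) else 1) / 2 ^ j.natAbs)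
    (F : ℕ → (ℤ → Bool) → (ℤ → Bool))
    (hF0 : ∀ k : ℕ, ∀ x : ℤ → Bool, ∀ j : ℤ, F (2 * k) x j = x (j + (k + 1)))
    (hF1 : ∀ k : ℕ, ∀ x : ℤ → Bool, ∀ j : ℤ, F (2 * k + 1) x j = x (j - (k + 1))) :
    (∀ x : ℤ → Bool, ∀ m : ℕ, nIter F (2 * m) x = x) ∧
    TopTransitive F ∧ Sensitive F ∧ ¬ TopMixing F := by
  refine ⟨fun x m => congrFun (nIter_two_mul hF0 hF1 m) x,
    topTransitive_of_shift_zigzag hF0 hF1, sensitive_of_shift_zigzag hd hF0 hF1,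
    not_topMixing_of_frequently_nIter_eq_id ?_⟩
  exact Filter.frequently_atTop.mpr fun N => ⟨2 * N, by omega, nIter_two_mul hF0 hF1 N⟩
end
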